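/- arXiv:1312.7271 — 4 statements merged into one kernel-verified Lean document; each statement's English description precedes it below -/
import Mathlib

section
/- Let G be a finite connected simple graph with n := n_G ≥ 1, fix a vertex v₀ and let P_G(x) be the reduced weighted Laplacian, and let T be a spanning tree of G. Then there exist a matrix U ∈ GL_n(ℤ) (an integer matrix with determinant ±1) and a bijection σ from the edge set of T to the index set V∖{v₀} such that for every edge e of T, the matrix ∂/∂x_e (Uᵀ·P_G(x)·U) has exactly one nonzero entry, namely the entry 1 in position (σ(e), σ(e)); in particular the variable x_e appears in Uᵀ·P_G(x)·U only in the diagonal entry (σ(e), σ(e)). -/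
open MvPolynomial Matrix

variable {V : Type}

/-- `T ⊆ E(G)` is a spanning tree of `G`: a set of `n_G = |V| - 1` edges such that the
subgraph `(V, T)` is connected. -/
def SimpleGraph.IsSpanningTree [Fintype V] (G : SimpleGraph V) (T : Finset G.edgeSet) : Prop :=
  T.card = Fintype.card V - 1 ∧
    (SimpleGraph.fromEdgeSet (Subtype.val '' (T : Set G.edgeSet))).Connected

-- The dual graph polynomial `φ_G = Σ_T Π_{e ∈ T} x_e`, summed over all spanning trees.
open scoped Classical in
noncomputable def dualPoly [Fintype V] (R : Type) [CommRing R] (G : SimpleGraph V)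
    [Fintype G.edgeSet] : MvPolynomial G.edgeSet R :=
  ∑ T ∈ Finset.univ.filter (fun T : Finset G.edgeSet => G.IsSpanningTree T), ∏ e ∈ T, X e

-- The reduced weighted Laplacian `P_G(x)` with respect to the removed vertex `v₀`.
open scoped Classical in
noncomputable def redLaplacian [Fintype V] (R : Type) [CommRing R] (G : SimpleGraph V)
    [Fintype G.edgeSet] (v₀ : V) :
    Matrix {u : V // u ≠ v₀} {u : V // u ≠ v₀} (MvPolynomial G.edgeSet R) :=
  fun u w =>
    if u = w then ∑ e : G.edgeSet, if (u : V) ∈ (e : Sym2 V) then X e else 0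
    else if h : G.Adj u.1 w.1 then - X ⟨s(u.1, w.1), (G.mem_edgeSet).mpr h⟩ else 0

/-!
Write `d_e ∈ ℤ^(V ∖ {v₀})` for the signed incidence vector of an edge `e` with the
`v₀`-coordinate dropped. Then `P_G(x) = ∑_e x_e d_e d_eᵀ`, so
`∂/∂x_e (Uᵀ P_G U) = (Uᵀ d_e)(Uᵀ d_e)ᵀ`. Telescoping along the path in `T` from a vertex to `v₀`
shows that the `d_e` with `e ∈ T` span `ℤ^(V ∖ {v₀})`; as there are `n_G` of them, the square
matrix `N` with these columns is unimodular, and `U = (N⁻¹)ᵀ` sends each `d_e` to a standard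
basis vector.
-/

lemma Matrix.map_pderiv_mul_mul_map_C {σ R l m n o : Type*} [CommSemiring R] [Fintype m]
    [Fintype n] (i : σ) (A : Matrix l m R) (M : Matrix m n (MvPolynomial σ R))
    (B : Matrix n o R) :
    (A.map (C (σ := σ)) * M * B.map (C (σ := σ))).map (pderiv i) =
      A.map (C (σ := σ)) * M.map (pderiv i) * B.map (C (σ := σ)) := by
  ext u w
  simp only [map_apply, mul_apply, map_sum, pderiv_mul, pderiv_C, mul_zero, zero_mul, add_zero,
    zero_add]

lemma Matrix.transpose_mul_vecMulVec_mul {R n : Type*} [CommSemiring R] [Fintype n]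
    (A : Matrix n n R) (d : n → R) :
    Aᵀ * vecMulVec d d * A = vecMulVec (Aᵀ *ᵥ d) (Aᵀ *ᵥ d) := by
  rw [mul_vecMulVec, vecMulVec_mul, mulVec_transpose]

lemma Matrix.exists_isUnit_det_transpose_mulVec_eq_single {R n ι : Type*} [CommRing R]
    [Fintype n] [DecidableEq n] (ε : ι ≃ n) (d : ι → n → R)
    (hd : Submodule.span R (Set.range d) = ⊤) :
    ∃ U : Matrix n n R, IsUnit U.det ∧ ∀ i, Uᵀ *ᵥ d i = Pi.single (ε i) 1 := by
  let N : Matrix n n R := of fun u v => d (ε.symm v) u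
  have hNcol : N.col = d ∘ ε.symm := rfl
  have hN : IsUnit N.det := by
    rw [← isUnit_iff_isUnit_det, ← mulVec_surjective_iff_isUnit]
    have hrange : LinearMap.range N.mulVecLin = ⊤ := by
      rw [range_mulVecLin, hNcol, ε.symm.surjective.range_comp, hd]
    exact LinearMap.range_eq_top.mp hrange
  refine ⟨N⁻¹ᵀ, ?_, fun i => ?_⟩
  · rw [det_transpose]
    exact isUnit_nonsing_inv_det N hN
  · have hNi : N *ᵥ Pi.single (ε i) 1 = d i := by
      rw [mulVec_single_one, hNcol, Function.comp_apply, Equiv.symm_apply_apply]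
    rw [transpose_transpose, ← hNi, mulVec_mulVec, nonsing_inv_mul N hN, one_mulVec]

namespace SimpleGraph

section Incidence

variable (R : Type*) [Ring R] [DecidableEq V] (v₀ : V)

def reducedIndicator (x : V) : {u : V // u ≠ v₀} → R := fun u => if (u : V) = x then 1 else 0

lemma reducedIndicator_self : reducedIndicator R v₀ v₀ = 0 :=
  funext fun u => if_neg u.2

lemma reducedIndicator_coe (u : {u : V // u ≠ v₀}) :
    reducedIndicator R v₀ u = Pi.single u 1 := by
  ext w
  simp [reducedIndicator, Pi.single_apply, Subtype.ext_iff]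

def reducedEdgeVec (x y : V) : {u : V // u ≠ v₀} → R :=
  reducedIndicator R v₀ x - reducedIndicator R v₀ y

lemma reducedEdgeVec_mul_apply {x y : V} (hxy : x ≠ y) (u w : {u : V // u ≠ v₀}) :
    reducedEdgeVec R v₀ x y u * reducedEdgeVec R v₀ x y w =
      if u = w then (if (u : V) ∈ s(x, y) then 1 else 0)
      else if s(x, y) = s((u : V), (w : V)) then -1 else 0 := by
  simp only [reducedEdgeVec, reducedIndicator, Pi.sub_apply, Sym2.mem_iff, Sym2.eq_iff,
    Subtype.ext_iff]
  split_ifs <;> grind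

variable (G : SimpleGraph V)

-- The orientation `Sym2.out` is arbitrary: only `± reducedIncidence` enters the arguments below.
noncomputable def reducedIncidence (e : G.edgeSet) : {u : V // u ≠ v₀} → R :=
  reducedEdgeVec R v₀ (e : Sym2 V).out.1 (e : Sym2 V).out.2

variable {G} in
lemma reducedIncidence_eq_or_eq_neg {e : G.edgeSet} {x y : V} (he : (e : Sym2 V) = s(x, y)) :
    reducedIncidence R v₀ G e = reducedEdgeVec R v₀ x y ∨
      reducedIncidence R v₀ G e = -reducedEdgeVec R v₀ x y := by
  have hout : s((e : Sym2 V).out.1, (e : Sym2 V).out.2) = s(x, y) := by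
    rw [← he]; exact Quot.out_eq _
  rcases Sym2.eq_iff.mp hout with ⟨h₁, h₂⟩ | ⟨h₁, h₂⟩
  · left; rw [reducedIncidence, h₁, h₂]
  · right; rw [reducedIncidence, h₁, h₂, reducedEdgeVec, reducedEdgeVec, neg_sub]

lemma reducedIncidence_mul_apply (e : G.edgeSet) (u w : {u : V // u ≠ v₀}) :
    reducedIncidence R v₀ G e u * reducedIncidence R v₀ G e w =
      if u = w then (if (u : V) ∈ (e : Sym2 V) then 1 else 0)
      else if (e : Sym2 V) = s((u : V), (w : V)) then -1 else 0 := by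
  obtain ⟨⟨x, y⟩, hxy⟩ : ∃ p, (e : Sym2 V).out = p := ⟨_, rfl⟩
  have he : (e : Sym2 V) = s(x, y) := by rw [← Quot.out_eq (e : Sym2 V), hxy]
  rw [reducedIncidence, hxy, he]
  have hadj : G.Adj x y := by rw [← G.mem_edgeSet, ← he]; exact e.2
  exact reducedEdgeVec_mul_apply R v₀ hadj.ne u w

end Incidence

section Laplacian

variable (R : Type) [CommRing R] [Fintype V] [DecidableEq V] (v₀ : V) (G : SimpleGraph V)
  [Fintype G.edgeSet]

lemma redLaplacian_apply_eq_sum (u w : {u : V // u ≠ v₀}) :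
    redLaplacian R G v₀ u w =
      ∑ f : G.edgeSet, C (reducedIncidence R v₀ G f u * reducedIncidence R v₀ G f w) * X f := by
  simp only [reducedIncidence_mul_apply, redLaplacian]
  split_ifs with huw hadj
  · refine Finset.sum_congr rfl fun f _ => ?_
    split_ifs <;> simp
  · rw [Finset.sum_eq_single ⟨s((u : V), (w : V)), G.mem_edgeSet.mpr hadj⟩]
    · simp
    · intro f _ hf
      rw [if_neg (fun h => hf (Subtype.ext h)), map_zero, zero_mul]
    · simp
  · refine (Finset.sum_eq_zero fun f _ => ?_).symm
    have hf : (f : Sym2 V) ≠ s((u : V), (w : V)) := fun h => hadj (G.mem_edgeSet.mp (h ▸ f.2))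
    rw [if_neg hf, map_zero, zero_mul]

lemma map_pderiv_redLaplacian (e : G.edgeSet) :
    (redLaplacian R G v₀).map (pderiv e) =
      (vecMulVec (reducedIncidence R v₀ G e) (reducedIncidence R v₀ G e)).map C := by
  ext u w
  rw [map_apply, redLaplacian_apply_eq_sum, map_sum, Finset.sum_eq_single e]
  · rw [pderiv_C_mul, pderiv_X_self, mul_one, map_apply, vecMulVec_apply]
  · intro f _ hf
    rw [pderiv_C_mul, pderiv_X_of_ne hf, mul_zero]
  · simp

lemma map_pderiv_conj_redLaplacian (U : Matrix {u : V // u ≠ v₀} {u : V // u ≠ v₀} R)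
    (e : G.edgeSet) :
    ((U.map C)ᵀ * redLaplacian R G v₀ * U.map C).map (pderiv e) =
      (vecMulVec (Uᵀ *ᵥ reducedIncidence R v₀ G e) (Uᵀ *ᵥ reducedIncidence R v₀ G e)).map C := by
  rw [← transpose_map, map_pderiv_mul_mul_map_C, map_pderiv_redLaplacian, ← Matrix.map_mul,
    ← Matrix.map_mul, transpose_mul_vecMulVec_mul]

end Laplacian

section Spanning

variable (R : Type*) [Ring R] [DecidableEq V] (v₀ : V) (G : SimpleGraph V)
  (T : Set G.edgeSet)

lemma reducedEdgeVec_mem_span_of_walk {a b : V} (p : (fromEdgeSet (Subtype.val '' T)).Walk a b) :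
    reducedEdgeVec R v₀ a b ∈
      Submodule.span R (Set.range fun f : T => reducedIncidence R v₀ G f) := by
  set S := Submodule.span R (Set.range fun f : T => reducedIncidence R v₀ G f)
  induction p with
  | nil => simp [reducedEdgeVec]
  | @cons x y z h p ih =>
    obtain ⟨⟨e, heT, hxy⟩, -⟩ := (fromEdgeSet_adj _).mp h
    have he : reducedIncidence R v₀ G e ∈ S := Submodule.subset_span ⟨⟨e, heT⟩, rfl⟩
    have hxy_mem : reducedEdgeVec R v₀ x y ∈ S := by
      rcases reducedIncidence_eq_or_eq_neg R v₀ hxy with h | h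
      · rwa [h] at he
      · rw [h] at he
        simpa using S.neg_mem he
    have := add_mem hxy_mem ih
    rwa [reducedEdgeVec, reducedEdgeVec, sub_add_sub_cancel] at this

lemma span_reducedIncidence_eq_top [Finite V]
    (hT : (fromEdgeSet (Subtype.val '' T)).Connected) :
    Submodule.span R (Set.range fun f : T => reducedIncidence R v₀ G f) = ⊤ := by
  rw [eq_top_iff, ← (Pi.basisFun R _).span_eq, Submodule.span_le]
  rintro _ ⟨u, rfl⟩
  have := reducedEdgeVec_mem_span_of_walk R v₀ G T (hT.preconnected u v₀).some
  rwa [reducedEdgeVec, reducedIndicator_self, sub_zero, reducedIndicator_coe,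
    ← Pi.basisFun_apply] at this

end Spanning

end SimpleGraph

theorem redLaplacian_diagonalization_general [Fintype V] [DecidableEq V] (G : SimpleGraph V)
    [Fintype G.edgeSet] (v₀ : V) (T : Finset G.edgeSet) (hT : G.IsSpanningTree T) :
    ∃ (U : Matrix {u : V // u ≠ v₀} {u : V // u ≠ v₀} ℤ)
      (σ : {e : G.edgeSet // e ∈ T} ≃ {u : V // u ≠ v₀}),
      (U.det = 1 ∨ U.det = -1) ∧
      ∀ (e : G.edgeSet) (he : e ∈ T) (u w : {u : V // u ≠ v₀}),
        pderiv e
            (((U.map fun a : ℤ => (C a : MvPolynomial G.edgeSet ℤ))ᵀ * redLaplacian ℤ G v₀ *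
                (U.map fun a : ℤ => (C a : MvPolynomial G.edgeSet ℤ))) u w)
          = if u = σ ⟨e, he⟩ ∧ w = σ ⟨e, he⟩ then 1 else 0 := by
  obtain ⟨hcard, hconn⟩ := hT
  let σ : {e // e ∈ T} ≃ {u : V // u ≠ v₀} := Fintype.equivOfCardEq <| by
    rw [Fintype.card_coe, hcard, Fintype.card_subtype_compl, Fintype.card_subtype_eq]
  obtain ⟨U, hdet, hU⟩ := exists_isUnit_det_transpose_mulVec_eq_single σ
    (fun f => G.reducedIncidence ℤ v₀ f) (G.span_reducedIncidence_eq_top ℤ v₀ T hconn)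
  refine ⟨U, σ, Int.isUnit_iff.mp hdet, fun e he u w => ?_⟩
  have h := congrFun₂ (G.map_pderiv_conj_redLaplacian ℤ v₀ U e) u w
  rw [hU ⟨e, he⟩, ← single_eq_single_vecMulVec_single] at h
  refine h.trans ?_
  rw [map_apply, single_apply, apply_ite C, map_one, map_zero]
  simp only [eq_comm]

/-- For a finite connected simple graph `G` with `n_G ≥ 1`, a vertex `v₀` and a
spanning tree `T`, there is an integer matrix `U` with determinant `±1` and a bijection `σ` from
the edges of `T` to the index set `V ∖ {v₀}`, such that for each edge `e` of `T` the derivative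
`∂/∂x_e (Uᵀ · P_G(x) · U)` has exactly one nonzero entry, namely `1` at position `(σ e, σ e)`. -/
theorem redLaplacian_diagonalization [Fintype V] [DecidableEq V] (G : SimpleGraph V)
    [Fintype G.edgeSet] (hG : G.Connected) (hn : 1 ≤ Fintype.card V - 1) (v₀ : V)
    (T : Finset G.edgeSet) (hT : G.IsSpanningTree T) :
    ∃ (U : Matrix {u : V // u ≠ v₀} {u : V // u ≠ v₀} ℤ)
      (σ : {e : G.edgeSet // e ∈ T} ≃ {u : V // u ≠ v₀}),
      (U.det = 1 ∨ U.det = -1) ∧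
      ∀ (e : G.edgeSet) (he : e ∈ T) (u w : {u : V // u ≠ v₀}),
        pderiv e
            (((U.map fun a : ℤ => (C a : MvPolynomial G.edgeSet ℤ))ᵀ * redLaplacian ℤ G v₀ *
                (U.map fun a : ℤ => (C a : MvPolynomial G.edgeSet ℤ))) u w)
          = if u = σ ⟨e, he⟩ ∧ w = σ ⟨e, he⟩ then 1 else 0 :=
  redLaplacian_diagonalization_general G v₀ T hT
end

section
/- Let k be a field of characteristic 0, let G be a finite connected simple graph with edge set E, and let T be a spanning tree of G. If α ∈ k^E satisfies φ_G(α) = 0 and (∂φ_G/∂x_e)(α) = 0 for every edge e ∈ T, then (∂φ_G/∂x_e)(α) = 0 for every edge e ∈ E; in other words, the singular locus Sing(Z_G) is already cut out by φ_G together with the n_G partial derivatives along the edges of any spanning tree. -/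
/-!
By Kirchhoff's matrix-tree theorem, `φ_G = det L(x)` for the reduced weighted Laplacian
`L(x) = Bᵀ diag(x) B`, where `B` is the signed incidence matrix with one vertex column deleted, and
Jacobi's formula turns the partial derivatives into `∂_e φ_G(α) = b_eᵀ adj(L(α)) b_e`, with `b_e`
the row of `B` at `e`. If `φ_G(α) = 0` then `L(α)` is singular, so its adjugate `A` is symmetric of
rank at most one: if `A ≠ 0` then `a A = r rᵀ` for some diagonal entry `a = A_ii ≠ 0` and `r = A_i`,
so `a ∂_e φ_G(α) = (r ⬝ b_e)²`. Vanishing along the edges of `T` forces `r ⊥ b_e` for `e ∈ T`; these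
rows span since `T` is connected, whence `r = 0`, a contradiction. So `A = 0` and every partial
derivative vanishes at `α`.
-/

open MvPolynomial

variable {V : Type}

open Matrix Finset

namespace Derivation

variable {R A : Type*} [CommSemiring R] [CommRing A] [Algebra R A]

theorem map_prod {M : Type*} [AddCommGroup M] [Module A M] [Module R M] (D : Derivation R A M)
    {ι : Type*} [DecidableEq ι] (s : Finset ι) (f : ι → A) :
    D (∏ i ∈ s, f i) = ∑ i ∈ s, (∏ j ∈ s.erase i, f j) • D (f i) := by
  induction s using Finset.induction_on with
  | empty => simp
  | @insert a s ha ih =>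
    rw [prod_insert ha, leibniz, ih, sum_insert ha, erase_insert ha, smul_sum, add_comm]
    refine congrArg _ (sum_congr rfl fun i hi => ?_)
    rw [erase_insert_of_ne (ne_of_mem_of_not_mem hi ha).symm, prod_insert (mt mem_of_mem_erase ha),
      smul_smul]

variable {n : Type*} [Fintype n] [DecidableEq n]

theorem map_det_eq_sum_det_updateCol (D : Derivation R A A) (M : Matrix n n A) :
    D M.det = ∑ i, (M.updateCol i fun r => D (M r i)).det := by
  simp_rw [det_apply, map_sum, Units.smul_def, map_zsmul, map_prod, smul_sum, smul_eq_mul]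
  rw [sum_comm]
  refine sum_congr rfl fun i _ => sum_congr rfl fun τ _ => ?_
  rw [← mul_prod_erase univ _ (mem_univ i), updateCol_self, mul_comm]
  congr 2
  exact prod_congr rfl fun j hj => by rw [updateCol_ne (ne_of_mem_erase hj)]

/-- Jacobi's formula. -/
theorem map_det (D : Derivation R A A) (M : Matrix n n A) :
    D M.det = trace (M.adjugate * M.map D) := by
  rw [map_det_eq_sum_det_updateCol, trace]
  refine sum_congr rfl fun i _ => ?_
  rw [← cramer_apply, cramer_eq_adjugate_mulVec]
  rfl

end Derivation

theorem Function.Injective.exists_perm_comp_eq {n ι : Type*} [Fintype n] [DecidableEq ι]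
    {s p : n → ι} (hp : p.Injective) (h : univ.image p = univ.image s) :
    ∃ π : Equiv.Perm n, s ∘ π = p := by
  choose τ hτ using fun i => by simpa [h] using mem_image_of_mem p (mem_univ i)
  have hτ_inj : τ.Injective := fun i j hij => hp (by rw [← hτ, ← hτ, hij])
  exact ⟨Equiv.ofBijective τ (Finite.injective_iff_bijective.1 hτ_inj), funext hτ⟩

namespace Matrix

theorem transpose_mul_diagonal_mul_apply {n ι R : Type*} [Fintype ι] [DecidableEq ι]
    [CommRing R] (B : Matrix ι n R) (w : ι → R) (r c : n) :
    (Bᵀ * diagonal w * B) r c = ∑ e, B e r * w e * B e c := by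
  rw [mul_apply]
  simp only [mul_diagonal, transpose_apply]

section CauchyBinet

variable {n ι R : Type*} [Fintype n] [DecidableEq n] [CommRing R]

theorem det_mul_eq_sum_prod_mul_det_submatrix [Fintype ι] (A : Matrix n ι R) (B : Matrix ι n R) :
    (A * B).det = ∑ p : n → ι, (∏ i, A i (p i)) * (B.submatrix p id).det := by
  have hrows : A * B = fun i => ∑ e, A i e • B e := by
    ext i j
    simp [mul_apply]
  rw [hrows]
  change detRowAlternating.toMultilinearMap _ = _
  rw [MultilinearMap.map_sum]
  refine sum_congr rfl fun p _ => ?_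
  rw [MultilinearMap.map_smul_univ]
  rfl

theorem det_mul_eq_sum_injective [Fintype ι] [DecidableEq ι] (A : Matrix n ι R)
    (B : Matrix ι n R) :
    (A * B).det = ∑ p with p.Injective, (∏ i, A i (p i)) * (B.submatrix p id).det := by
  rw [det_mul_eq_sum_prod_mul_det_submatrix, sum_filter_of_ne]
  intro p _ hp
  by_contra hinj
  obtain ⟨i, j, hpij, hij⟩ := Function.not_injective_iff.1 hinj
  exact hp (by rw [det_zero_of_row_eq hij (by ext; simp [hpij]), mul_zero])

theorem sum_perm_prod_mul_det_submatrix_comp (A : Matrix n ι R) (B : Matrix ι n R) (s : n → ι) :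
    ∑ π : Equiv.Perm n, (∏ i, A i (s (π i))) * (B.submatrix (s ∘ π) id).det =
      (A.submatrix id s).det * (B.submatrix s id).det := by
  rw [← det_transpose (A.submatrix id s), det_apply, sum_mul]
  refine sum_congr rfl fun π _ => ?_
  have : B.submatrix (s ∘ π) id = (B.submatrix s id).submatrix π id := rfl
  rw [this, det_permute]
  simp [Units.smul_def, mul_comm, mul_left_comm]

theorem sum_injective_image_eq_prod_mul_det_submatrix [Fintype ι] [DecidableEq ι]
    (A : Matrix n ι R) (B : Matrix ι n R) {s : n → ι} (hs : s.Injective) :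
    ∑ p with p.Injective ∧ univ.image p = univ.image s, (∏ i, A i (p i)) * (B.submatrix p id).det =
      (A.submatrix id s).det * (B.submatrix s id).det := by
  rw [← sum_perm_prod_mul_det_submatrix_comp]
  symm
  refine sum_nbij (fun π => s ∘ π) ?_ ?_ ?_ fun _ _ => rfl
  · intro π _
    exact mem_filter.2 ⟨mem_univ _, hs.comp π.injective, by rw [image_comp, image_univ_equiv]⟩
  · intro π _ π' _ h
    exact Equiv.ext fun i => hs (congrFun h i)
  · intro p hp
    rw [mem_coe, mem_filter] at hp
    obtain ⟨π, hπ⟩ := hp.2.1.exists_perm_comp_eq hp.2.2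
    exact ⟨π, mem_coe.2 (mem_univ _), hπ⟩

/-- The Cauchy–Binet formula. -/
theorem det_mul_eq_sum_finset [Fintype ι] [DecidableEq ι] (A : Matrix n ι R) (B : Matrix ι n R)
    (f : Finset ι → R) (hf : ∀ p : n → ι, p.Injective →
      (A.submatrix id p).det * (B.submatrix p id).det = f (univ.image p)) :
    (A * B).det = ∑ S with S.card = Fintype.card n, f S := by
  rw [det_mul_eq_sum_injective, ← sum_fiberwise_of_maps_to (g := fun p => univ.image p)
    (t := {S | S.card = Fintype.card n})]
  · refine sum_congr rfl fun S hS => ?_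
    obtain ⟨σ⟩ : Nonempty (n ≃ S) := Fintype.card_eq.1 (by simpa using (mem_filter.1 hS).2.symm)
    set s : n → ι := fun i => σ i
    have hs : s.Injective := Subtype.val_injective.comp σ.injective
    have hS : univ.image s = S := by
      ext e
      simp only [mem_image, mem_univ, true_and]
      exact ⟨fun ⟨i, hi⟩ => hi ▸ (σ i).2, fun he => ⟨σ.symm ⟨e, he⟩, by simp [s]⟩⟩
    rw [← hS, ← hf s hs, filter_filter, sum_injective_image_eq_prod_mul_det_submatrix A B hs]
  · intro p hp
    simp only [mem_filter, mem_univ, true_and] at hp ⊢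
    rw [card_image_of_injective _ hp, card_univ]

theorem det_transpose_mul_diagonal_mul [Fintype ι] [DecidableEq ι] (B : Matrix ι n R)
    (w : ι → R) (f : Finset ι → R)
    (hf : ∀ p : n → ι, p.Injective → (B.submatrix p id).det ^ 2 = f (univ.image p)) :
    (Bᵀ * diagonal w * B).det = ∑ S with S.card = Fintype.card n, f S * ∏ e ∈ S, w e := by
  refine det_mul_eq_sum_finset _ _ _ fun p hp => ?_
  have hA : (Bᵀ * diagonal w).submatrix id p = (B.submatrix p id)ᵀ * diagonal (w ∘ p) := by
    ext i j
    simp [mul_diagonal]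
  rw [hA, det_mul, det_transpose, det_diagonal, ← hf p hp, prod_image hp.injOn]
  simp only [Function.comp_apply]
  ring

end CauchyBinet

variable {n K : Type*} [Fintype n] [DecidableEq n] [Field K]

theorem eq_zero_of_mulVec_eq_zero_of_adjugate_ne_zero {N : Matrix n n K} {i j : n}
    (hij : N.adjugate i j ≠ 0) {z : n → K} (hz : N *ᵥ z = 0) (hzi : z i = 0) : z = 0 := by
  -- `N.adjugate i j` is the determinant of `N` with row `j` replaced by `Pi.single i 1`.
  set P := N.updateRow j (Pi.single i 1)
  have hP : IsUnit P := by
    rw [isUnit_iff_isUnit_det, isUnit_iff_ne_zero, ← adjugate_apply]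
    exact hij
  refine (mulVec_injective_of_isUnit hP) ?_
  rw [mulVec_zero]
  funext r
  rcases eq_or_ne r j with rfl | hr
  · simp [P, mulVec, hzi]
  · simpa [P, mulVec, updateRow_ne hr] using congrFun hz r

theorem adjugate_mul_adjugate_of_det_eq_zero {N : Matrix n n K} (hN : N.det = 0) {i j : n}
    (hij : N.adjugate i j ≠ 0) (p q : n) :
    N.adjugate i j * N.adjugate p q = N.adjugate i q * N.adjugate p j := by
  set A := N.adjugate
  have hcol : ∀ q, N *ᵥ (fun r => A r q) = 0 := fun q => by
    funext r
    simpa [A, mul_adjugate, hN, mulVec, dotProduct, mul_apply] using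
      congrFun (congrFun N.mul_adjugate r) q
  have hz := eq_zero_of_mulVec_eq_zero_of_adjugate_ne_zero hij
    (z := A i j • (fun r => A r q) - A i q • (fun r => A r j))
    (by rw [mulVec_sub, mulVec_smul, mulVec_smul, hcol, hcol, smul_zero, smul_zero, sub_zero])
    (by simp only [Pi.sub_apply, Pi.smul_apply, smul_eq_mul]; ring)
  simpa [sub_eq_zero] using congrFun hz p

theorem IsSymm.eq_zero_of_dotProduct_mulVec_self_eq_zero {A : Matrix n n K} (hAs : A.IsSymm)
    (hrank : ∀ i j, A i j ≠ 0 → ∀ p q, A i j * A p q = A i q * A p j)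
    {ι : Type*} (u : ι → n → K) (hu : Submodule.span K (Set.range u) = ⊤)
    (h : ∀ f, u f ⬝ᵥ (A *ᵥ u f) = 0) : A = 0 := by
  by_contra hA
  obtain ⟨i, j, hij⟩ : ∃ i j, A i j ≠ 0 := by
    by_contra! h0
    exact hA (Matrix.ext h0)
  have hii : A i i ≠ 0 := by
    intro hii
    have := hrank i j hij j i
    rw [hii, zero_mul, hAs.apply i j] at this
    exact hij (mul_self_eq_zero.1 this)
  have hrank_one : A i i • A = vecMulVec (A i) (A i) := by
    ext p q
    rw [smul_apply, smul_eq_mul, hrank i i hii, vecMulVec_apply, hAs.apply i p, mul_comm]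
  have hrow : ∀ f, A i ⬝ᵥ u f = 0 := by
    intro f
    have hsq : (A i ⬝ᵥ u f) ^ 2 = A i i * (u f ⬝ᵥ (A *ᵥ u f)) := by
      rw [← smul_eq_mul, ← dotProduct_smul, ← smul_mulVec, hrank_one, vecMulVec_mulVec,
        op_smul_eq_smul, dotProduct_smul, smul_eq_mul, dotProduct_comm, sq]
    rw [h f, mul_zero] at hsq
    exact pow_eq_zero_iff two_ne_zero |>.1 hsq
  have hspan : ∀ x ∈ Submodule.span K (Set.range u), A i ⬝ᵥ x = 0 := by
    intro x hx
    induction hx using Submodule.span_induction with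
    | mem x hx => obtain ⟨f, rfl⟩ := hx; exact hrow f
    | zero => exact dotProduct_zero _
    | add x y _ _ hx hy => rw [dotProduct_add, hx, hy, add_zero]
    | smul c x _ hx => rw [dotProduct_smul, hx, smul_zero]
  have := hspan (Pi.single i 1) (hu ▸ Submodule.mem_top)
  rw [dotProduct_single, mul_one] at this
  exact hii this

end Matrix

theorem MvPolynomial.eval_comp_X {σ R : Type*} [CommSemiring R] (f : σ → R) : eval f ∘ X = f := by
  ext i
  exact eval_X i

namespace SimpleGraph

variable [DecidableEq V] (R : Type*) [Ring R] (G : SimpleGraph V) (v₀ : V)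

/-- The signed incidence matrix with the column of `v₀` deleted; each edge is oriented by the
arbitrary representative `Quot.out e` of its unordered pair. -/
noncomputable def reducedIncMatrix : Matrix G.edgeSet {v // v ≠ v₀} R :=
  of fun e => (Pi.single (Quot.out e.1).1 1 - Pi.single (Quot.out e.1).2 1 : V → R) ∘ Subtype.val

variable {R G v₀}

theorem reducedIncMatrix_row (e : G.edgeSet) : G.reducedIncMatrix R v₀ e =
    (Pi.single (Quot.out e.1).1 1 - Pi.single (Quot.out e.1).2 1 : V → R) ∘ Subtype.val :=
  rfl

theorem reducedIncMatrix_eq_map_intCast (R : Type*) [Ring R] :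
    G.reducedIncMatrix R v₀ = (G.reducedIncMatrix ℤ v₀).map (Int.cast : ℤ → R) := by
  ext e w
  simp [reducedIncMatrix_row, Pi.single_apply, apply_ite (Int.cast : ℤ → R)]

theorem reducedIncMatrix_map {R S : Type*} [Ring R] [Ring S] (f : R →+* S) :
    (G.reducedIncMatrix R v₀).map f = G.reducedIncMatrix S v₀ := by
  rw [reducedIncMatrix_eq_map_intCast R, reducedIncMatrix_eq_map_intCast S, Matrix.map_map]
  congr 1
  funext x
  exact map_intCast f x

theorem sub_single_mem_span_reducedIncMatrix {e : G.edgeSet} {a b : V} (h : e.1 = s(a, b)) :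
    (Pi.single a 1 - Pi.single b 1 : V → R) ∘ Subtype.val ∈
      Submodule.span R {G.reducedIncMatrix R v₀ e} := by
  have hab : s((Quot.out e.1).1, (Quot.out e.1).2) = s(a, b) := (Quot.out_eq _).trans h
  rcases Sym2.eq_iff.1 hab with ⟨h1, h2⟩ | ⟨h1, h2⟩
  · exact Submodule.subset_span (by rw [Set.mem_singleton_iff, reducedIncMatrix_row, h1, h2])
  · refine neg_mem_iff.1 (Submodule.subset_span ?_)
    ext w
    simp [reducedIncMatrix_row, h1, h2]

theorem sub_single_mem_span_of_reachable (S : Set G.edgeSet) {a b : V}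
    (hab : (fromEdgeSet (Subtype.val '' S)).Reachable a b) :
    (Pi.single a 1 - Pi.single b 1 : V → R) ∘ Subtype.val ∈
      Submodule.span R (G.reducedIncMatrix R v₀ '' S) := by
  obtain ⟨p⟩ := hab
  induction p with
  | nil => simp
  | @cons u v w huv _ ih =>
    obtain ⟨⟨e, heS, he⟩, -⟩ := (fromEdgeSet_adj _).1 huv
    have hsplit : (Pi.single u 1 - Pi.single w 1 : V → R) ∘ (Subtype.val : {v // v ≠ v₀} → V) =
        (Pi.single u 1 - Pi.single v 1 : V → R) ∘ Subtype.val +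
          (Pi.single v 1 - Pi.single w 1 : V → R) ∘ Subtype.val := by
      ext; simp
    rw [hsplit]
    refine add_mem (Submodule.span_mono ?_ (sub_single_mem_span_reducedIncMatrix he)) ih
    exact Set.singleton_subset_iff.2 (Set.mem_image_of_mem _ heS)

section LapMatrix

variable (G v₀) [Fintype G.edgeSet]

noncomputable def reducedLapMatrix {R : Type*} [CommRing R] (w : G.edgeSet → R) :
    Matrix {v // v ≠ v₀} {v // v ≠ v₀} R :=
  (G.reducedIncMatrix R v₀)ᵀ * diagonal w * G.reducedIncMatrix R v₀

variable {G v₀}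

theorem isSymm_reducedLapMatrix {R : Type*} [CommRing R] (w : G.edgeSet → R) :
    (G.reducedLapMatrix v₀ w).IsSymm := by
  rw [IsSymm, reducedLapMatrix, transpose_mul, transpose_mul, diagonal_transpose,
    transpose_transpose, Matrix.mul_assoc]

theorem reducedLapMatrix_map {R S : Type*} [CommRing R] [CommRing S] (f : R →+* S)
    (w : G.edgeSet → R) :
    (G.reducedLapMatrix v₀ w).map f = G.reducedLapMatrix v₀ (f ∘ w) := by
  rw [reducedLapMatrix, reducedLapMatrix, Matrix.map_mul, Matrix.map_mul, transpose_map,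
    diagonal_map (map_zero f), reducedIncMatrix_map]
  rfl

theorem reducedLapMatrix_X_map_pderiv (R : Type*) [CommRing R] (e : G.edgeSet) :
    (G.reducedLapMatrix v₀ (X : G.edgeSet → MvPolynomial G.edgeSet R)).map (pderiv e) =
      vecMulVec (G.reducedIncMatrix _ v₀ e) (G.reducedIncMatrix _ v₀ e) := by
  ext r c : 1
  rw [map_apply, reducedLapMatrix, transpose_mul_diagonal_mul_apply, map_sum,
    ← reducedIncMatrix_map C, Fintype.sum_eq_single e]
  · simp [vecMulVec_apply, mul_comm]
  · intro f hf
    simp [pderiv_X, hf]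

end LapMatrix

variable [Fintype V]

theorem reducedIncMatrix_dotProduct {y : V → R} (hy : y v₀ = 0) (e : G.edgeSet) :
    G.reducedIncMatrix R v₀ e ⬝ᵥ (y ∘ Subtype.val) = y (Quot.out e.1).1 - y (Quot.out e.1).2 := by
  have hsum : ∀ u : V → R, u ∘ Subtype.val ⬝ᵥ y ∘ (Subtype.val : {v // v ≠ v₀} → V) = u ⬝ᵥ y :=
    fun u => by rw [dotProduct, dotProduct, Fintype.sum_eq_add_sum_subtype_ne _ v₀, hy, mul_zero,
      zero_add]; rfl
  rw [reducedIncMatrix_row, hsum, sub_dotProduct, single_dotProduct, single_dotProduct, one_mul,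
    one_mul]

theorem span_reducedIncMatrix_eq_top (S : Set G.edgeSet)
    (hS : (fromEdgeSet (Subtype.val '' S)).Connected) :
    Submodule.span R (G.reducedIncMatrix R v₀ '' S) = ⊤ := by
  rw [eq_top_iff, ← (Pi.basisFun R _).span_eq, Submodule.span_le]
  rintro _ ⟨w, rfl⟩
  have hw : Pi.basisFun R {v // v ≠ v₀} w =
      (Pi.single w.1 1 - Pi.single v₀ 1 : V → R) ∘ Subtype.val := by
    ext x
    simp [Pi.single_apply, x.2, Subtype.ext_iff]
  rw [hw]
  exact sub_single_mem_span_of_reachable S (hS.preconnected w.1 v₀)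

theorem isUnit_det_reducedIncMatrix_submatrix {R : Type*} [CommRing R]
    (p : {v // v ≠ v₀} → G.edgeSet)
    (hp : (fromEdgeSet (Subtype.val '' Set.range p)).Connected) :
    IsUnit ((G.reducedIncMatrix R v₀).submatrix p id).det := by
  rw [← isUnit_iff_isUnit_det, ← vecMul_surjective_iff_isUnit, ← coe_vecMulLinear,
    ← LinearMap.range_eq_top, range_vecMulLinear, row_def, ← span_reducedIncMatrix_eq_top _ hp]
  exact congrArg _ (Set.range_comp (G.reducedIncMatrix R v₀) p)

theorem det_reducedIncMatrix_submatrix_eq_zero {R : Type*} [CommRing R] [IsDomain R]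
    (p : {v // v ≠ v₀} → G.edgeSet)
    (hp : ¬(fromEdgeSet (Subtype.val '' Set.range p)).Connected) :
    ((G.reducedIncMatrix R v₀).submatrix p id).det = 0 := by
  set H := fromEdgeSet (Subtype.val '' Set.range p)
  obtain ⟨a, ha⟩ : ∃ a, ¬H.Reachable a v₀ := by
    by_contra! h
    have : Nonempty V := ⟨v₀⟩
    exact hp ⟨fun x y => (h x).trans (h y).symm⟩
  classical
  -- the indicator of the component of `a` is a nonzero kernel vector
  set y : V → R := fun v => if H.Reachable a v then 1 else 0
  rw [← exists_mulVec_eq_zero_iff]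
  refine ⟨y ∘ Subtype.val, fun h0 => ?_, ?_⟩
  · have := congrFun h0 ⟨a, fun h => ha (h ▸ .rfl)⟩
    simp [y] at this
  · ext i
    have hadj : H.Adj (Quot.out (p i).1).1 (Quot.out (p i).1).2 := by
      refine (fromEdgeSet_adj _).2 ⟨⟨p i, ⟨i, rfl⟩, (Quot.out_eq _).symm⟩, fun h => ?_⟩
      refine G.not_isDiag_of_mem_edgeSet (p i).2 ?_
      rw [← Quot.out_eq (p i).1]
      exact Sym2.mk_isDiag_iff.2 h
    have hiff : H.Reachable a (Quot.out (p i).1).1 ↔ H.Reachable a (Quot.out (p i).1).2 :=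
      ⟨fun h => h.trans hadj.reachable, fun h => h.trans hadj.symm.reachable⟩
    change G.reducedIncMatrix R v₀ (p i) ⬝ᵥ (y ∘ Subtype.val) = 0
    rw [reducedIncMatrix_dotProduct (by simp [y, ha])]
    simp only [y, hiff, sub_self]

theorem det_reducedIncMatrix_submatrix_sq (R : Type*) [CommRing R]
    (p : {v // v ≠ v₀} → G.edgeSet)
    [Decidable (fromEdgeSet (Subtype.val '' Set.range p)).Connected] :
    ((G.reducedIncMatrix R v₀).submatrix p id).det ^ 2 =
      if (fromEdgeSet (Subtype.val '' Set.range p)).Connected then 1 else 0 := by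
  rw [reducedIncMatrix_eq_map_intCast, submatrix_map, ← Int.cast_det, ← Int.cast_pow]
  split_ifs with hp
  · rw [Int.isUnit_sq (isUnit_det_reducedIncMatrix_submatrix p hp), Int.cast_one]
  · rw [det_reducedIncMatrix_submatrix_eq_zero p hp, zero_pow two_ne_zero, Int.cast_zero]

variable (G v₀) [Fintype G.edgeSet]

/-- Kirchhoff's matrix-tree theorem. -/
theorem det_reducedLapMatrix_X (R : Type) [CommRing R] :
    (G.reducedLapMatrix v₀ (X : G.edgeSet → MvPolynomial G.edgeSet R)).det = dualPoly R G := by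
  classical
  have hcard : Fintype.card {v // v ≠ v₀} = Fintype.card V - 1 := by
    simp [Fintype.card_subtype_compl]
  rw [reducedLapMatrix, det_transpose_mul_diagonal_mul _ _
    (fun S => if (fromEdgeSet (Subtype.val '' (S : Set G.edgeSet))).Connected then 1 else 0)
    fun p _ => by rw [det_reducedIncMatrix_submatrix_sq, coe_image, coe_univ, Set.image_univ],
    dualPoly, sum_filter, sum_filter]
  refine sum_congr rfl fun S _ => ?_
  simp only [IsSpanningTree, hcard]
  split_ifs <;> simp_all

variable {G}

theorem eval_dualPoly {R : Type} [CommRing R] (α : G.edgeSet → R) :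
    eval α (dualPoly R G) = (G.reducedLapMatrix v₀ α).det := by
  rw [← det_reducedLapMatrix_X G v₀, RingHom.map_det, RingHom.mapMatrix_apply,
    reducedLapMatrix_map, eval_comp_X]

theorem eval_pderiv_dualPoly {R : Type} [CommRing R] (α : G.edgeSet → R) (e : G.edgeSet) :
    eval α (pderiv e (dualPoly R G)) =
      G.reducedIncMatrix R v₀ e ⬝ᵥ
        (G.reducedLapMatrix v₀ α).adjugate *ᵥ G.reducedIncMatrix R v₀ e := by
  rw [← det_reducedLapMatrix_X G v₀, Derivation.map_det, reducedLapMatrix_X_map_pderiv,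
    mul_vecMulVec, trace_vecMulVec, RingHom.map_dotProduct, dotProduct_comm]
  have hb : eval α ∘ G.reducedIncMatrix _ v₀ e = G.reducedIncMatrix R v₀ e :=
    congrFun (reducedIncMatrix_map (eval α)) e
  have hA : (G.reducedLapMatrix v₀ X).adjugate.map (eval α) =
      (G.reducedLapMatrix v₀ α).adjugate := by
    rw [← RingHom.mapMatrix_apply, RingHom.map_adjugate, RingHom.mapMatrix_apply,
      reducedLapMatrix_map, eval_comp_X]
  rw [show eval α ∘ ((G.reducedLapMatrix v₀ X).adjugate *ᵥ G.reducedIncMatrix _ v₀ e) =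
      (G.reducedLapMatrix v₀ X).adjugate.map (eval α) *ᵥ (eval α ∘ G.reducedIncMatrix _ v₀ e)
    from funext (RingHom.map_mulVec _ _ _), hA, hb]

end SimpleGraph

theorem singular_locus_cut_by_spanning_tree_general (k : Type) [Field k]
    [Fintype V] (G : SimpleGraph V) [Fintype G.edgeSet]
    (T : Finset G.edgeSet) (hT : G.IsSpanningTree T) (α : G.edgeSet → k)
    (h0 : eval α (dualPoly k G) = 0)
    (hTd : ∀ e ∈ T, eval α (pderiv e (dualPoly k G)) = 0) :
    ∀ e : G.edgeSet, eval α (pderiv e (dualPoly k G)) = 0 := by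
  classical
  obtain ⟨v₀⟩ := hT.2.nonempty
  have hsingular : (G.reducedLapMatrix v₀ α).det = 0 := G.eval_dualPoly v₀ α ▸ h0
  have hspan : Submodule.span k (Set.range fun e : T => G.reducedIncMatrix k v₀ e) = ⊤ := by
    rw [← G.span_reducedIncMatrix_eq_top _ hT.2]
    exact congrArg _ (Set.image_eq_range _ _).symm
  have hadj : (G.reducedLapMatrix v₀ α).adjugate = 0 :=
    (G.isSymm_reducedLapMatrix α).adjugate.eq_zero_of_dotProduct_mulVec_self_eq_zero
      (fun _ _ hij => adjugate_mul_adjugate_of_det_eq_zero hsingular hij) _ hspan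
      fun e => G.eval_pderiv_dualPoly v₀ α e ▸ hTd e e.2
  intro e
  rw [G.eval_pderiv_dualPoly v₀, hadj, zero_mulVec, dotProduct_zero]

/-- Over a field `k` of characteristic `0`, if `α` kills `φ_G` and the partial
derivatives `∂φ_G/∂x_e` along all edges `e` of a spanning tree `T`, then it kills all the partial
derivatives: the singular locus of the dual graph hypersurface is cut out by `φ_G` together with
the `n_G` derivatives along any spanning tree. -/
theorem singular_locus_cut_by_spanning_tree (k : Type) [Field k] [CharZero k]
    [Fintype V] (G : SimpleGraph V) [Fintype G.edgeSet] (hG : G.Connected)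
    (T : Finset G.edgeSet) (hT : G.IsSpanningTree T) (α : G.edgeSet → k)
    (h0 : eval α (dualPoly k G) = 0)
    (hTd : ∀ e ∈ T, eval α (pderiv e (dualPoly k G)) = 0) :
    ∀ e : G.edgeSet, eval α (pderiv e (dualPoly k G)) = 0 :=
  singular_locus_cut_by_spanning_tree_general k G T hT α h0 hTd
end

section
/- Let G be a finite connected simple graph with n+1 vertices (n = n_G), enumerate V = {v₁, …, v_{n+1}} and take v₀ := v_{n+1} both as the vertex set to zero in the quadrics and as the removed vertex of the reduced weighted Laplacian P_G. Let q be a prime power and let I ⊆ E be a nonempty set of edges. Put A := #{x ∈ F_q^{4n} : q_e(x) = 0 for all e ∈ I} and B := #{(α, y, z) ∈ F_q^I × F_qⁿ × F_qⁿ : M(α)·y = 0 and M(α)·z = 0}, where M(α) is the matrix P_G(x) evaluated at x_e = α_e for e ∈ I and x_e = 0 for e ∉ I. Then q^{|I|−1}·A = q^{2n−1}·B. -/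
open MvPolynomial

variable {V : Type}

-- For an edge `{s, t}`, the quadric `q_e(x) = |x_s - x_t|²` where `|y|² = y¹y² + y³y⁴`.
def quadVal (F : Type) [CommRing F] (x : V → Fin 4 → F) : Sym2 V → F :=
  Sym2.lift ⟨fun s t =>
      (x s 0 - x t 0) * (x s 1 - x t 1) + (x s 2 - x t 2) * (x s 3 - x t 3),
    fun s t => by ring⟩

section Aux

open Finset

variable {F : Type} [Field F] [Fintype F]

lemma count_ker {ι : Type} [Fintype ι] [DecidableEq ι] (c : ι → F) (hc : c ≠ 0) :
    Nat.card {γ : ι → F // ∑ i, γ i * c i = 0}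
      = Fintype.card F ^ (Fintype.card ι - 1) := by
  classical
  set φ : (ι → F) →ₗ[F] F :=
    { toFun := fun γ => ∑ i, γ i * c i
      map_add' := by intro a b; simp [add_mul, Finset.sum_add_distrib]
      map_smul' := by intro m a; simp [Finset.mul_sum, mul_assoc] } with hφ
  have hsurj : Function.Surjective φ := by
    intro b
    obtain ⟨i, hi⟩ : ∃ i, c i ≠ 0 := by
      by_contra h; push_neg at h; exact hc (funext h)
    refine ⟨Pi.single i (b / c i), ?_⟩
    simp [hφ, Pi.single_apply, Finset.sum_ite_eq', div_mul_cancel₀ _ hi]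
  have hcard : Nat.card ((ι → F) ⧸ LinearMap.ker φ) = Fintype.card F := by
    rw [Nat.card_congr (LinearMap.quotKerEquivOfSurjective φ hsurj).toEquiv,
      Nat.card_eq_fintype_card]
  have h1 : Nat.card (ι → F)
      = Fintype.card F * Nat.card (LinearMap.ker φ) := by
    rw [AddSubgroup.card_eq_card_quotient_mul_card_addSubgroup
      (LinearMap.ker φ).toAddSubgroup]
    congr 1
  have h2 : Nat.card (ι → F) = Fintype.card F ^ Fintype.card ι := by
    simp [Nat.card_fun, Nat.card_eq_fintype_card]
  have hne : Nonempty ι := by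
    by_contra h
    exact hc (funext fun i => absurd ⟨i⟩ h)
  have hι : 1 ≤ Fintype.card ι := Fintype.card_pos
  have h3 : Nat.card {γ : ι → F // ∑ i, γ i * c i = 0} = Nat.card (LinearMap.ker φ) := by
    apply Nat.card_congr
    exact Equiv.subtypeEquivRight (fun γ => by simp [hφ, LinearMap.mem_ker])
  rw [h3]
  have hq : 0 < Fintype.card F := Fintype.card_pos
  have h4 := h1.symm.trans h2
  have hpow : Fintype.card F ^ Fintype.card ι
      = Fintype.card F * Fintype.card F ^ (Fintype.card ι - 1) := by
    obtain ⟨m, hm⟩ : ∃ m, Fintype.card ι = m + 1 := ⟨_, (Nat.succ_pred_eq_of_pos hι).symm⟩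
    rw [hm, pow_succ']
    simp
  rw [hpow] at h4
  exact Nat.eq_of_mul_eq_mul_left hq h4

lemma sum_ite_card {X : Type} [Fintype X] (P : X → Prop) [DecidablePred P] (b c : ℕ) :
    ∑ x : X, (if P x then b else c)
      = Nat.card {x // P x} * b + Nat.card {x // ¬ P x} * c := by
  classical
  rw [Finset.sum_ite]
  simp [Nat.card_eq_fintype_card, Fintype.card_subtype, mul_comm]

lemma sum_indicator {X : Type} [Fintype X] (P : X → Prop) [DecidablePred P] :
    ∑ x : X, (if P x then (1 : ℕ) else 0) = Nat.card {x // P x} := by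
  classical
  rw [sum_ite_card]
  simp

lemma card_subtype_prod {X Y : Type} [Fintype X] [Fintype Y] (P : X → Y → Prop)
    [∀ x y, Decidable (P x y)] :
    Nat.card {p : X × Y // P p.1 p.2} = ∑ x : X, Nat.card {y : Y // P x y} := by
  rw [Nat.card_congr (Equiv.subtypeProdEquivSigmaSubtype P), Nat.card_eq_fintype_card,
    Fintype.card_sigma]
  simp [Nat.card_eq_fintype_card]

lemma sum_dite_mul {γ : Type} [Fintype γ] [DecidableEq γ] (I : Finset γ)
    (α : ↥I → F) (g : γ → F) :
    ∑ e : γ, (if h : e ∈ I then α ⟨e, h⟩ else 0) * g e = ∑ e : ↥I, α e * g e.1 := by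
  classical
  have h1 : ∑ e : γ, (if h : e ∈ I then α ⟨e, h⟩ else 0) * g e
      = ∑ e ∈ I, (if h : e ∈ I then α ⟨e, h⟩ else 0) * g e :=
    (Finset.sum_subset (Finset.subset_univ I) (fun e _ he => by simp [he])).symm
  rw [h1, ← Finset.sum_attach I (fun e => (if h : e ∈ I then α ⟨e, h⟩ else 0) * g e)]
  refine Finset.sum_congr rfl fun e _ => ?_
  rw [dif_pos e.2]

end Aux

section Key
open Finset

variable [Fintype V] [DecidableEq V] (G : SimpleGraph V) [Fintype G.edgeSet] (v₀ : V)
variable (F : Type) [Field F] [Fintype F]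

noncomputable def Mev (a : G.edgeSet → F) : Matrix {u : V // u ≠ v₀} {u : V // u ≠ v₀} F :=
  (redLaplacian F G v₀).map (MvPolynomial.eval a)

def edgeQuad (Y Z : V → F) : Sym2 V → F :=
  Sym2.lift ⟨fun s t => (Y s - Y t) * (Z s - Z t), fun s t => by ring⟩

variable {G v₀ F}

lemma Mev_diag (a : G.edgeSet → F) (u : {u : V // u ≠ v₀}) :
    Mev G v₀ F a u u = ∑ e : G.edgeSet, (if (u : V) ∈ (e : Sym2 V) then a e else 0) := by
  classical
  simp [Mev, redLaplacian, Matrix.map_apply, apply_ite (MvPolynomial.eval a)]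

open scoped Classical in
lemma Mev_offdiag (a : G.edgeSet → F) (u w : {u : V // u ≠ v₀}) (h : u ≠ w) :
    Mev G v₀ F a u w
      = if h2 : G.Adj u.1 w.1 then -a ⟨s(u.1, w.1), (G.mem_edgeSet).mpr h2⟩ else 0 := by
  classical
  by_cases h2 : G.Adj u.1 w.1 <;>
    simp [Mev, redLaplacian, Matrix.map_apply, h, h2]

lemma Mev_symm (a : G.edgeSet → F) (u w : {u : V // u ≠ v₀}) :
    Mev G v₀ F a u w = Mev G v₀ F a w u := by
  classical
  rcases eq_or_ne u w with rfl | h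
  · rfl
  · rw [Mev_offdiag a u w h, Mev_offdiag a w u h.symm]
    by_cases h2 : G.Adj u.1 w.1
    · rw [dif_pos h2, dif_pos h2.symm]
      have : (⟨s(u.1, w.1), (G.mem_edgeSet).mpr h2⟩ : G.edgeSet)
          = ⟨s(w.1, u.1), (G.mem_edgeSet).mpr h2.symm⟩ := Subtype.ext (Sym2.eq_swap)
      rw [this]
    · rw [dif_neg h2, dif_neg (fun hh => h2 hh.symm)]

lemma sum_ne_eq_sum (g : V → F) (hg : g v₀ = 0) :
    ∑ u : {u : V // u ≠ v₀}, g u.1 = ∑ u : V, g u := by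
  classical
  have h1 : ∑ u : {u : V // u ≠ v₀}, g u.1 = ∑ u ∈ ({v₀}ᶜ : Finset V), g u :=
    (Finset.sum_subtype _ (fun x => by simp) g).symm
  have h2 := Finset.sum_compl_add_sum ({v₀} : Finset V) g
  rw [Finset.sum_singleton, hg, add_zero] at h2
  rw [h1, h2]

lemma key (a : G.edgeSet → F) (Y Z : V → F) (hY : Y v₀ = 0) (hZ : Z v₀ = 0) :
    ∑ u : {u : V // u ≠ v₀}, ∑ w : {u : V // u ≠ v₀}, Mev G v₀ F a u w * Y u.1 * Z w.1
      = ∑ e : G.edgeSet, a e * edgeQuad F Y Z (e : Sym2 V) := by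
  classical
  set od : V → V → F :=
    fun s t => if h : G.Adj s t then -a ⟨s(s, t), (G.mem_edgeSet).mpr h⟩ else 0 with hod
  set D : V → F := fun v => ∑ e : G.edgeSet, (if v ∈ (e : Sym2 V) then a e else 0) with hD
  set pairSum : Sym2 V → F :=
    Sym2.lift ⟨fun s t => Y s * Z t + Y t * Z s, fun s t => by ring⟩ with hps
  have stepA : ∀ u w : {u : V // u ≠ v₀},
      Mev G v₀ F a u w * Y u.1 * Z w.1
        = (if u = w then D u.1 * Y u.1 * Z u.1 else 0) + od u.1 w.1 * Y u.1 * Z w.1 := by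
    intro u w
    rcases eq_or_ne u w with rfl | h
    · have h0 : od u.1 u.1 = 0 := dif_neg (G.irrefl)
      rw [Mev_diag, if_pos rfl, h0, zero_mul, zero_mul, add_zero, hD]
    · have hODval : od u.1 w.1
          = if h2 : G.Adj u.1 w.1 then -a ⟨s(u.1, w.1), (G.mem_edgeSet).mpr h2⟩ else 0 := by
        simp only [hod]
      rw [Mev_offdiag a u w h, if_neg h, zero_add, hODval]
  have split : ∑ u : {u : V // u ≠ v₀}, ∑ w : {u : V // u ≠ v₀},
        Mev G v₀ F a u w * Y u.1 * Z w.1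
      = (∑ u : {u : V // u ≠ v₀}, D u.1 * Y u.1 * Z u.1)
        + ∑ u : {u : V // u ≠ v₀}, ∑ w : {u : V // u ≠ v₀}, od u.1 w.1 * Y u.1 * Z w.1 := by
    rw [← Finset.sum_add_distrib]
    refine Finset.sum_congr rfl fun u _ => ?_
    rw [Finset.sum_congr rfl (fun w _ => stepA u w), Finset.sum_add_distrib,
      Finset.sum_ite_eq Finset.univ u (fun w => D u.1 * Y u.1 * Z u.1),
      if_pos (Finset.mem_univ u)]
  rw [split]
  -- extend both sums to all of V
  have hDsum : ∑ u : {u : V // u ≠ v₀}, D u.1 * Y u.1 * Z u.1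
      = ∑ u : V, D u * Y u * Z u :=
    sum_ne_eq_sum (fun u => D u * Y u * Z u) (by simp [hY])
  have hOinner : ∀ u : V, ∑ w : {u : V // u ≠ v₀}, od u w.1 * Y u * Z w.1
      = ∑ w : V, od u w * Y u * Z w := fun u =>
    sum_ne_eq_sum (fun w => od u w * Y u * Z w) (by simp [hZ])
  have hOsum : ∑ u : {u : V // u ≠ v₀}, ∑ w : {u : V // u ≠ v₀}, od u.1 w.1 * Y u.1 * Z w.1
      = ∑ u : V, ∑ w : V, od u w * Y u * Z w := by
    rw [Finset.sum_congr rfl (fun u _ => hOinner u.1)]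
    exact sum_ne_eq_sum (fun u => ∑ w : V, od u w * Y u * Z w) (by simp [hY])
  rw [hDsum, hOsum]
  -- diagonal part, edge by edge
  have hDedge : ∑ u : V, D u * Y u * Z u
      = ∑ e : G.edgeSet, a e * (∑ u : V, if u ∈ (e : Sym2 V) then Y u * Z u else 0) := by
    simp only [hD, Finset.sum_mul, ite_mul, zero_mul]
    rw [Finset.sum_comm]
    refine Finset.sum_congr rfl fun e _ => ?_
    rw [Finset.mul_sum]
    refine Finset.sum_congr rfl fun u _ => ?_
    by_cases hmem : u ∈ (e : Sym2 V) <;> simp [hmem, mul_assoc]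
  -- off-diagonal part, edge by edge (2:1 fibering over edges)
  have hOedge : ∑ u : V, ∑ w : V, od u w * Y u * Z w
      = ∑ e : G.edgeSet, -(a e * pairSum (e : Sym2 V)) := by
    rw [← Finset.sum_product']
    rw [← sum_fiberwise_of_maps_to (g := fun p : V × V => s(p.1, p.2))
      (fun p _ => Finset.mem_univ _) (fun p => od p.1 p.2 * Y p.1 * Z p.2)]
    have hzero : ∀ y ∈ (Finset.univ : Finset (Sym2 V)),
        y ∉ G.edgeSet →
        (∑ p ∈ (Finset.univ ×ˢ Finset.univ).filter (fun p : V × V => s(p.1, p.2) = y),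
          od p.1 p.2 * Y p.1 * Z p.2) = 0 := by
      intro y _ hy
      refine Finset.sum_eq_zero fun p hp => ?_
      rw [Finset.mem_filter] at hp
      by_cases hadj : G.Adj p.1 p.2
      · exact absurd (hp.2 ▸ (G.mem_edgeSet).mpr hadj) hy
      · simp [hod, hadj]
    have hsplit : ∑ y : Sym2 V,
        (∑ p ∈ (Finset.univ ×ˢ Finset.univ).filter (fun p : V × V => s(p.1, p.2) = y),
          od p.1 p.2 * Y p.1 * Z p.2)
        = ∑ y ∈ Finset.univ.filter (fun y => y ∈ G.edgeSet),
          (∑ p ∈ (Finset.univ ×ˢ Finset.univ).filter (fun p : V × V => s(p.1, p.2) = y),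
            od p.1 p.2 * Y p.1 * Z p.2) := by
      rw [Finset.sum_filter_of_ne]
      intro y hy hne
      by_contra hmem
      exact hne (hzero y hy hmem)
    rw [hsplit]
    rw [Finset.sum_subtype (p := fun y : Sym2 V => y ∈ G.edgeSet) _ (fun y => by simp)]
    refine Finset.sum_congr rfl fun e he => ?_
    clear he
    obtain ⟨z, hz⟩ := e
    revert hz
    induction z using Sym2.ind with
    | _ s t =>
      intro hz
      have hadj : G.Adj s t := (G.mem_edgeSet).mp hz
      have hst : s ≠ t := hadj.ne
      have hfil : ((Finset.univ ×ˢ Finset.univ).filter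
          (fun p : V × V => s(p.1, p.2) = s(s, t))) = {(s, t), (t, s)} := by
        ext p
        simp only [Finset.mem_filter, Finset.mem_product, Finset.mem_univ, true_and,
          Finset.mem_insert, Finset.mem_singleton, Sym2.eq_iff, Prod.ext_iff]
        try tauto
      rw [hfil, Finset.sum_pair (by simp [hst] : ((s, t) : V × V) ≠ (t, s))]
      have hkey1 : (⟨s(s, t), (G.mem_edgeSet).mpr hadj⟩ : G.edgeSet)
          = ⟨s(s, t), hz⟩ := Subtype.ext rfl
      have h1 : od s t = -a ⟨s(s, t), hz⟩ := by
        simp only [hod]; rw [dif_pos hadj, hkey1]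
      have hkey2 : (⟨s(t, s), (G.mem_edgeSet).mpr hadj.symm⟩ : G.edgeSet)
          = ⟨s(s, t), hz⟩ := Subtype.ext (Sym2.eq_swap)
      have h2 : od t s = -a ⟨s(s, t), hz⟩ := by
        simp only [hod]; rw [dif_pos hadj.symm, hkey2]
      rw [h1, h2, hps]
      simp only [Sym2.lift_mk]
      ring
  rw [hDedge, hOedge, ← Finset.sum_add_distrib]
  refine Finset.sum_congr rfl fun e he => ?_
  clear he
  obtain ⟨z, hz⟩ := e
  revert hz
  induction z using Sym2.ind with
  | _ s t =>
    intro hz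
    have hadj : G.Adj s t := (G.mem_edgeSet).mp hz
    have hst : s ≠ t := hadj.ne
    have hdia : (∑ u : V, if u ∈ s(s, t) then Y u * Z u else 0) = Y s * Z s + Y t * Z t := by
      have hconv : ∀ u : V, (if u ∈ s(s, t) then Y u * Z u else 0)
          = (if u ∈ ({s, t} : Finset V) then Y u * Z u else 0) := by
        intro u
        by_cases hu : u ∈ s(s, t)
        · rw [if_pos hu, if_pos (by rw [Sym2.mem_iff] at hu; simp [hu])]
        · rw [if_neg hu, if_neg (by rw [Sym2.mem_iff] at hu; simp; tauto)]
      rw [Finset.sum_congr rfl (fun u _ => hconv u), Finset.sum_ite_mem,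
        Finset.univ_inter, Finset.sum_pair hst]
    rw [hdia, hps]
    simp only [Sym2.lift_mk, edgeQuad]
    ring

lemma bilin_mulVec (M : Matrix {u : V // u ≠ v₀} {u : V // u ≠ v₀} F)
    (hsym : ∀ u w, M u w = M w u) (y z : {u : V // u ≠ v₀} → F) :
    ∑ u : {u : V // u ≠ v₀}, ∑ w : {u : V // u ≠ v₀}, M u w * y u * z w
      = ∑ w : {u : V // u ≠ v₀}, z w * M.mulVec y w := by
  rw [Finset.sum_comm]
  refine Finset.sum_congr rfl fun w _ => ?_
  rw [Matrix.mulVec, dotProduct, Finset.mul_sum]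
  refine Finset.sum_congr rfl fun u _ => ?_
  rw [hsym u w]
  ring

end Key

section Main

open Finset

variable [Fintype V] [DecidableEq V] (G : SimpleGraph V) [Fintype G.edgeSet] (v₀ : V)
variable (F : Type) [Field F] [Fintype F]

def aof (I : Finset G.edgeSet) (α : ↥I → F) : G.edgeSet → F :=
  fun e => if h : e ∈ I then α ⟨e, h⟩ else 0

noncomputable def MM (I : Finset G.edgeSet) (α : ↥I → F) :
    Matrix {u : V // u ≠ v₀} {u : V // u ≠ v₀} F :=
  Mev G v₀ F (aof G F I α)

noncomputable def Psi (I : Finset G.edgeSet) (α : ↥I → F)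
    (y : (({u : V // u ≠ v₀} → F) × ({u : V // u ≠ v₀} → F))
        × (({u : V // u ≠ v₀} → F) × ({u : V // u ≠ v₀} → F))) : F :=
  (∑ w : {u : V // u ≠ v₀}, y.2.1 w * (MM G v₀ F I α).mulVec y.1.1 w)
    + ∑ w : {u : V // u ≠ v₀}, y.2.2 w * (MM G v₀ F I α).mulVec y.1.2 w

def QQ (I : Finset G.edgeSet) (α : ↥I → F)
    (yz : ({u : V // u ≠ v₀} → F) × ({u : V // u ≠ v₀} → F)) : Prop :=
  (MM G v₀ F I α).mulVec yz.1 = 0 ∧ (MM G v₀ F I α).mulVec yz.2 = 0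

variable {G v₀ F}

lemma quadVal_split (x : V → Fin 4 → F) (z : Sym2 V) :
    quadVal F x z = edgeQuad F (fun v => x v 0) (fun v => x v 1) z
      + edgeQuad F (fun v => x v 2) (fun v => x v 3) z := by
  induction z using Sym2.ind with
  | _ s t => simp [quadVal, edgeQuad]

variable (v₀) in
def coordEquiv : {x : V → Fin 4 → F // x v₀ = 0} ≃
    (({u : V // u ≠ v₀} → F) × ({u : V // u ≠ v₀} → F))
      × (({u : V // u ≠ v₀} → F) × ({u : V // u ≠ v₀} → F)) where
  toFun x := ((fun u => x.1 u.1 0, fun u => x.1 u.1 2),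
    (fun u => x.1 u.1 1, fun u => x.1 u.1 3))
  invFun y := ⟨fun v i => if h : v = v₀ then 0 else
      if i = 0 then y.1.1 ⟨v, h⟩ else if i = 1 then y.2.1 ⟨v, h⟩
      else if i = 2 then y.1.2 ⟨v, h⟩ else y.2.2 ⟨v, h⟩, by funext i; simp⟩
  left_inv x := by
    apply Subtype.ext; funext v i
    by_cases h : v = v₀
    · subst h; simp [x.2]
    · fin_cases i <;> simp [h]
  right_inv y := by
    refine Prod.ext (Prod.ext ?_ ?_) (Prod.ext ?_ ?_) <;> funext u <;> simp [u.2]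

lemma Phi_trans (I : Finset G.edgeSet) (α : ↥I → F)
    (x : {x : V → Fin 4 → F // x v₀ = 0}) :
    (∑ e : ↥I, α e * quadVal F x.1 ((e : G.edgeSet) : Sym2 V))
      = Psi G v₀ F I α (coordEquiv v₀ x) := by
  classical
  calc (∑ e : ↥I, α e * quadVal F x.1 ((e : G.edgeSet) : Sym2 V))
      = ∑ e : G.edgeSet, aof G F I α e * quadVal F x.1 (e : Sym2 V) :=
        (sum_dite_mul I α (fun e : G.edgeSet => quadVal F x.1 (e : Sym2 V))).symm
    _ = ∑ e : G.edgeSet, aof G F I α e *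
          (edgeQuad F (fun v => x.1 v 0) (fun v => x.1 v 1) (e : Sym2 V)
            + edgeQuad F (fun v => x.1 v 2) (fun v => x.1 v 3) (e : Sym2 V)) := by
        refine Finset.sum_congr rfl fun e _ => ?_
        rw [quadVal_split]
    _ = (∑ e : G.edgeSet, aof G F I α e
            * edgeQuad F (fun v => x.1 v 0) (fun v => x.1 v 1) (e : Sym2 V))
        + ∑ e : G.edgeSet, aof G F I α e
            * edgeQuad F (fun v => x.1 v 2) (fun v => x.1 v 3) (e : Sym2 V) := by
        rw [← Finset.sum_add_distrib]
        exact Finset.sum_congr rfl fun e _ => by ring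
    _ = (∑ u : {u : V // u ≠ v₀}, ∑ w : {u : V // u ≠ v₀},
            Mev G v₀ F (aof G F I α) u w * x.1 u.1 0 * x.1 w.1 1)
        + ∑ u : {u : V // u ≠ v₀}, ∑ w : {u : V // u ≠ v₀},
            Mev G v₀ F (aof G F I α) u w * x.1 u.1 2 * x.1 w.1 3 := by
        rw [← key (aof G F I α) (fun v => x.1 v 0) (fun v => x.1 v 1)
            (congrFun x.2 0) (congrFun x.2 1),
          ← key (aof G F I α) (fun v => x.1 v 2) (fun v => x.1 v 3)
            (congrFun x.2 2) (congrFun x.2 3)]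
    _ = Psi G v₀ F I α (coordEquiv v₀ x) := by
        rw [bilin_mulVec (Mev G v₀ F (aof G F I α)) (fun u w => Mev_symm _ u w)
            (fun u => x.1 u.1 0) (fun w => x.1 w.1 1),
          bilin_mulVec (Mev G v₀ F (aof G F I α)) (fun u w => Mev_symm _ u w)
            (fun u => x.1 u.1 2) (fun w => x.1 w.1 3)]
        rfl

lemma final_arith (q A A' B B' k m : ℕ) (hq : 2 ≤ q)
    (h1 : A * q ^ (k + 1) + A' * q ^ k = B * q ^ (m + 1) + B' * q ^ m)
    (hC : (A + A') * q ^ k = (B + B') * q ^ m) :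
    q ^ k * A = q ^ m * B := by
  have h1' : (A : ℤ) * (q : ℤ) ^ (k + 1) + (A' : ℤ) * (q : ℤ) ^ k
      = (B : ℤ) * (q : ℤ) ^ (m + 1) + (B' : ℤ) * (q : ℤ) ^ m := by exact_mod_cast h1
  have hC' : ((A : ℤ) + A') * (q : ℤ) ^ k = ((B : ℤ) + B') * (q : ℤ) ^ m := by
    exact_mod_cast hC
  have h7 : ((q : ℤ) - 1) * ((A : ℤ) * (q : ℤ) ^ k)
      = ((q : ℤ) - 1) * ((B : ℤ) * (q : ℤ) ^ m) := by
    have e1 : (q : ℤ) ^ (k + 1) = (q : ℤ) ^ k * q := by ring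
    have e2 : (q : ℤ) ^ (m + 1) = (q : ℤ) ^ m * q := by ring
    rw [e1, e2] at h1'
    linear_combination h1' - hC'
  have hq1 : ((q : ℤ) - 1) ≠ 0 := by
    have : (2 : ℤ) ≤ (q : ℤ) := by exact_mod_cast hq
    omega
  have h8 : (A : ℤ) * (q : ℤ) ^ k = (B : ℤ) * (q : ℤ) ^ m :=
    mul_left_cancel₀ hq1 h7
  have h9 : ((q : ℤ) ^ k * A) = ((q : ℤ) ^ m * B) := by linear_combination h8
  exact_mod_cast h9

end Main

/-- the Schwinger trick, pointwise over `F_q`. For a finite connected simple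
graph `G`, a distinguished vertex `v₀` (whose four coordinates are set to zero), a finite field
`F_q` and a nonempty set `I` of edges, with
`A = #{x ∈ F_q^{4n} : q_e(x) = 0 ∀ e ∈ I}` and
`B = #{(α, y, z) : M(α)y = 0 ∧ M(α)z = 0}` (where `M(α)` is the reduced weighted Laplacian
with `x_e = α_e` for `e ∈ I` and `x_e = 0` otherwise), one has
`q^{|I|−1}·A = q^{2n−1}·B`. -/
theorem quadrics_vs_laplacian_count [Fintype V] [DecidableEq V] (G : SimpleGraph V)
    [Fintype G.edgeSet] (hG : G.Connected) (v₀ : V) (F : Type) [Field F] [Fintype F]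
    (I : Finset G.edgeSet) (hI : I.Nonempty) :
    Fintype.card F ^ (I.card - 1) *
        Nat.card {x : V → Fin 4 → F // x v₀ = 0 ∧ ∀ e ∈ I, quadVal F x (e : Sym2 V) = 0}
      = Fintype.card F ^ (2 * (Fintype.card V - 1) - 1) *
        Nat.card {p : (I → F) × ({u : V // u ≠ v₀} → F) × ({u : V // u ≠ v₀} → F) //
          ((redLaplacian F G v₀).map fun pol =>
              eval (fun e => if h : e ∈ I then p.1 ⟨e, h⟩ else 0) pol).mulVec p.2.1 = 0 ∧
          ((redLaplacian F G v₀).map fun pol =>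
              eval (fun e => if h : e ∈ I then p.1 ⟨e, h⟩ else 0) pol).mulVec p.2.2 = 0} := by
  classical
  obtain ⟨k', hk'⟩ : ∃ k', I.card = k' + 1 :=
    ⟨I.card - 1, (Nat.succ_pred_eq_of_pos (Finset.card_pos.mpr hI)).symm⟩
  have hV2 : 2 ≤ Fintype.card V := by
    obtain ⟨e0, he0⟩ := hI
    obtain ⟨z, hz⟩ := e0
    clear he0
    have hex : ∃ s t : V, s ≠ t := by
      revert hz
      induction z using Sym2.ind with
      | _ s t => exact fun hz => ⟨s, t, ((G.mem_edgeSet).mp hz).ne⟩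
    obtain ⟨s, t, hst⟩ := hex
    have : Nontrivial V := ⟨⟨s, t, hst⟩⟩
    exact Fintype.one_lt_card
  obtain ⟨n', hn'⟩ : ∃ n', Fintype.card V - 1 = n' + 1 := ⟨Fintype.card V - 2, by omega⟩
  have hq2 : 2 ≤ Fintype.card F := Fintype.one_lt_card
  have eA : n' + 1 + (n' + 1) - 1 = 2 * n' + 1 := by omega
  have eD : 2 * n' + 1 + 1 + (2 * n' + 1 + 1) = 2 * (2 * n' + 1 + 1) := by omega
  have eB : 2 * (2 * n' + 1 + 1) + k' = k' + 1 + (2 * n' + 1 + 1 + (2 * n' + 1)) := by omega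
  have eC : 2 * (n' + 1) - 1 = 2 * n' + 1 := by omega
  have hcardV' : Fintype.card {u : V // u ≠ v₀} = n' + 1 := by
    have h := Fintype.card_subtype_compl (fun u : V => u = v₀)
    rw [Fintype.card_subtype_eq] at h
    rw [← hn']
    exact h
  have hcardW1 : Fintype.card ({u : V // u ≠ v₀} → F) = Fintype.card F ^ (n' + 1) := by
    rw [Fintype.card_fun, hcardV']
  have hcardPair : Fintype.card (({u : V // u ≠ v₀} → F) × ({u : V // u ≠ v₀} → F))
      = Fintype.card F ^ (2 * n' + 1 + 1) := by
    rw [Fintype.card_prod, hcardW1, ← pow_add]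
    congr 1
    omega
  have hcardI : Fintype.card ↥I = k' + 1 := by rw [Fintype.card_coe, hk']
  -- direction 1
  have hNdir1 : (∑ α : ↥I → F, ∑ x : {x : V → Fin 4 → F // x v₀ = 0},
        if (∑ e : ↥I, α e * quadVal F x.1 ((e : G.edgeSet) : Sym2 V)) = 0 then (1:ℕ) else 0)
      = Nat.card {x : {x : V → Fin 4 → F // x v₀ = 0} //
            ∀ e ∈ I, quadVal F x.1 (e : Sym2 V) = 0} * Fintype.card F ^ (k' + 1)
        + Nat.card {x : {x : V → Fin 4 → F // x v₀ = 0} //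
            ¬ ∀ e ∈ I, quadVal F x.1 (e : Sym2 V) = 0} * Fintype.card F ^ k' := by
    rw [Finset.sum_comm]
    have inner : ∀ x : {x : V → Fin 4 → F // x v₀ = 0},
        (∑ α : ↥I → F, if (∑ e : ↥I, α e * quadVal F x.1 ((e : G.edgeSet) : Sym2 V)) = 0
            then (1:ℕ) else 0)
          = if (∀ e ∈ I, quadVal F x.1 (e : Sym2 V) = 0) then Fintype.card F ^ (k' + 1)
            else Fintype.card F ^ k' := by
      intro x
      rw [sum_indicator]
      by_cases hPx : ∀ e ∈ I, quadVal F x.1 (e : Sym2 V) = 0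
      · rw [if_pos hPx]
        have hall : ∀ α : ↥I → F,
            (∑ e : ↥I, α e * quadVal F x.1 ((e : G.edgeSet) : Sym2 V)) = 0 := fun α =>
          Finset.sum_eq_zero fun e _ => by rw [hPx e.1 e.2, mul_zero]
        rw [Nat.card_congr (Equiv.subtypeUnivEquiv hall), Nat.card_fun,
          Nat.card_eq_fintype_card, Nat.card_eq_fintype_card, hcardI]
      · rw [if_neg hPx]
        have hc : (fun e : ↥I => quadVal F x.1 ((e : G.edgeSet) : Sym2 V)) ≠ 0 := by
          intro h0
          exact hPx fun e he => congrFun h0 ⟨e, he⟩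
        have hck := count_ker (fun e : ↥I => quadVal F x.1 ((e : G.edgeSet) : Sym2 V)) hc
        rw [hcardI] at hck
        simpa using hck
    rw [Finset.sum_congr rfl fun x _ => inner x, sum_ite_card]
  -- fiber count
  have hfiber : ∀ (α : ↥I → F)
      (y13 : ({u : V // u ≠ v₀} → F) × ({u : V // u ≠ v₀} → F)),
      Nat.card {y24 : ({u : V // u ≠ v₀} → F) × ({u : V // u ≠ v₀} → F) //
          Psi G v₀ F I α (y13, y24) = 0}
        = if QQ G v₀ F I α y13 then Fintype.card F ^ (2 * n' + 1 + 1)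
          else Fintype.card F ^ (2 * n' + 1) := by
    intro α y13
    by_cases hQ : QQ G v₀ F I α y13
    · rw [if_pos hQ]
      have hall : ∀ y24, Psi G v₀ F I α (y13, y24) = 0 := fun y24 => by
        simp [Psi, hQ.1, hQ.2]
      rw [Nat.card_congr (Equiv.subtypeUnivEquiv hall), Nat.card_eq_fintype_card, hcardPair]
    · rw [if_neg hQ]
      set c : ({u : V // u ≠ v₀} ⊕ {u : V // u ≠ v₀}) → F :=
        Sum.elim ((MM G v₀ F I α).mulVec y13.1) ((MM G v₀ F I α).mulVec y13.2) with hcdef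
      have hsum : ∀ y24 : ({u : V // u ≠ v₀} → F) × ({u : V // u ≠ v₀} → F),
          (∑ i : {u : V // u ≠ v₀} ⊕ {u : V // u ≠ v₀},
            ((Equiv.sumArrowEquivProdArrow _ _ F).symm y24) i * c i)
            = Psi G v₀ F I α (y13, y24) := by
        intro y24
        rw [Fintype.sum_sum_type]
        simp [Equiv.sumArrowEquivProdArrow, Psi, hcdef]
      have heq : {y24 : ({u : V // u ≠ v₀} → F) × ({u : V // u ≠ v₀} → F) //
            Psi G v₀ F I α (y13, y24) = 0}
          ≃ {γ : ({u : V // u ≠ v₀} ⊕ {u : V // u ≠ v₀}) → F // ∑ i, γ i * c i = 0} := by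
        refine Equiv.subtypeEquiv (Equiv.sumArrowEquivProdArrow _ _ F).symm fun y24 => ?_
        rw [← hsum y24]
      have hc : c ≠ 0 := by
        intro h0
        apply hQ
        constructor
        · funext u; exact congrFun h0 (Sum.inl u)
        · funext u; exact congrFun h0 (Sum.inr u)
      rw [Nat.card_congr heq, count_ker c hc, Fintype.card_sum, hcardV', eA]
  -- direction 2
  have hNdir2 : (∑ α : ↥I → F, ∑ x : {x : V → Fin 4 → F // x v₀ = 0},
        if (∑ e : ↥I, α e * quadVal F x.1 ((e : G.edgeSet) : Sym2 V)) = 0 then (1:ℕ) else 0)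
      = (∑ α : ↥I → F, Nat.card {yz : ({u : V // u ≠ v₀} → F) × ({u : V // u ≠ v₀} → F) //
            QQ G v₀ F I α yz}) * Fintype.card F ^ (2 * n' + 1 + 1)
        + (∑ α : ↥I → F, Nat.card {yz : ({u : V // u ≠ v₀} → F) × ({u : V // u ≠ v₀} → F) //
            ¬ QQ G v₀ F I α yz}) * Fintype.card F ^ (2 * n' + 1) := by
    rw [Finset.sum_mul, Finset.sum_mul, ← Finset.sum_add_distrib]
    refine Finset.sum_congr rfl fun α _ => ?_
    calc (∑ x : {x : V → Fin 4 → F // x v₀ = 0},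
          if (∑ e : ↥I, α e * quadVal F x.1 ((e : G.edgeSet) : Sym2 V)) = 0 then (1:ℕ) else 0)
        = Nat.card {x : {x : V → Fin 4 → F // x v₀ = 0} //
            (∑ e : ↥I, α e * quadVal F x.1 ((e : G.edgeSet) : Sym2 V)) = 0} :=
          sum_indicator _
      _ = Nat.card {y : (({u : V // u ≠ v₀} → F) × ({u : V // u ≠ v₀} → F))
              × (({u : V // u ≠ v₀} → F) × ({u : V // u ≠ v₀} → F)) //
            Psi G v₀ F I α y = 0} :=
          Nat.card_congr (Equiv.subtypeEquiv (coordEquiv v₀) fun x => by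
            rw [Phi_trans I α x])
      _ = ∑ y13 : ({u : V // u ≠ v₀} → F) × ({u : V // u ≠ v₀} → F),
            Nat.card {y24 : ({u : V // u ≠ v₀} → F) × ({u : V // u ≠ v₀} → F) //
              Psi G v₀ F I α (y13, y24) = 0} :=
          card_subtype_prod fun y13 y24 => Psi G v₀ F I α (y13, y24) = 0
      _ = ∑ y13 : ({u : V // u ≠ v₀} → F) × ({u : V // u ≠ v₀} → F),
            (if QQ G v₀ F I α y13 then Fintype.card F ^ (2 * n' + 1 + 1)
              else Fintype.card F ^ (2 * n' + 1)) :=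
          Finset.sum_congr rfl fun y13 _ => hfiber α y13
      _ = Nat.card {yz : ({u : V // u ≠ v₀} → F) × ({u : V // u ≠ v₀} → F) //
              QQ G v₀ F I α yz} * Fintype.card F ^ (2 * n' + 1 + 1)
          + Nat.card {yz : ({u : V // u ≠ v₀} → F) × ({u : V // u ≠ v₀} → F) //
              ¬ QQ G v₀ F I α yz} * Fintype.card F ^ (2 * n' + 1) := sum_ite_card _ _ _
  -- complements
  have hPsum : Nat.card {x : {x : V → Fin 4 → F // x v₀ = 0} //
          ∀ e ∈ I, quadVal F x.1 (e : Sym2 V) = 0}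
      + Nat.card {x : {x : V → Fin 4 → F // x v₀ = 0} //
          ¬ ∀ e ∈ I, quadVal F x.1 (e : Sym2 V) = 0}
      = Fintype.card F ^ (2 * (2 * n' + 1 + 1)) := by
    rw [Nat.card_eq_fintype_card, Nat.card_eq_fintype_card, Fintype.card_subtype,
      Fintype.card_subtype, Finset.card_filter_add_card_filter_not, Finset.card_univ,
      Fintype.card_congr (coordEquiv v₀ (F := F)), Fintype.card_prod, hcardPair,
      ← pow_add, eD]
  have hQsum : ∀ α : ↥I → F,
      Nat.card {yz : ({u : V // u ≠ v₀} → F) × ({u : V // u ≠ v₀} → F) // QQ G v₀ F I α yz}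
      + Nat.card {yz : ({u : V // u ≠ v₀} → F) × ({u : V // u ≠ v₀} → F) //
          ¬ QQ G v₀ F I α yz}
        = Fintype.card F ^ (2 * n' + 1 + 1) := by
    intro α
    rw [Nat.card_eq_fintype_card, Nat.card_eq_fintype_card, Fintype.card_subtype,
      Fintype.card_subtype, Finset.card_filter_add_card_filter_not, Finset.card_univ,
      hcardPair]
  have hBB' : (∑ α : ↥I → F, Nat.card {yz : ({u : V // u ≠ v₀} → F) × ({u : V // u ≠ v₀} → F) //
          QQ G v₀ F I α yz})
      + (∑ α : ↥I → F, Nat.card {yz : ({u : V // u ≠ v₀} → F) × ({u : V // u ≠ v₀} → F) //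
          ¬ QQ G v₀ F I α yz})
      = Fintype.card F ^ (k' + 1) * Fintype.card F ^ (2 * n' + 1 + 1) := by
    rw [← Finset.sum_add_distrib, Finset.sum_congr rfl fun α _ => hQsum α,
      Finset.sum_const, Finset.card_univ, Fintype.card_fun, hcardI, smul_eq_mul]
  have hmain := hNdir1.symm.trans hNdir2
  have hC : (Nat.card {x : {x : V → Fin 4 → F // x v₀ = 0} //
          ∀ e ∈ I, quadVal F x.1 (e : Sym2 V) = 0}
      + Nat.card {x : {x : V → Fin 4 → F // x v₀ = 0} //
          ¬ ∀ e ∈ I, quadVal F x.1 (e : Sym2 V) = 0}) * Fintype.card F ^ k'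
      = ((∑ α : ↥I → F, Nat.card {yz : ({u : V // u ≠ v₀} → F) × ({u : V // u ≠ v₀} → F) //
            QQ G v₀ F I α yz})
        + (∑ α : ↥I → F, Nat.card {yz : ({u : V // u ≠ v₀} → F) × ({u : V // u ≠ v₀} → F) //
            ¬ QQ G v₀ F I α yz})) * Fintype.card F ^ (2 * n' + 1) := by
    rw [hPsum, hBB', ← pow_add, mul_assoc, ← pow_add, ← pow_add, eB]
  have hfin := final_arith (Fintype.card F) _ _ _ _ k' (2 * n' + 1) hq2 hmain hC
  have hAeq : Nat.card {x : V → Fin 4 → F // x v₀ = 0 ∧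
        ∀ e ∈ I, quadVal F x (e : Sym2 V) = 0}
      = Nat.card {x : {x : V → Fin 4 → F // x v₀ = 0} //
          ∀ e ∈ I, quadVal F x.1 (e : Sym2 V) = 0} :=
    (Nat.card_congr (Equiv.subtypeSubtypeEquivSubtypeInter
      (fun x : V → Fin 4 → F => x v₀ = 0)
      (fun x => ∀ e ∈ I, quadVal F x (e : Sym2 V) = 0))).symm
  have hBeq : Nat.card {p : (↥I → F) ×
        (({u : V // u ≠ v₀} → F) × ({u : V // u ≠ v₀} → F)) // QQ G v₀ F I p.1 p.2}
      = ∑ α : ↥I → F, Nat.card {yz : ({u : V // u ≠ v₀} → F) × ({u : V // u ≠ v₀} → F) //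
          QQ G v₀ F I α yz} :=
    card_subtype_prod _
  rw [hk', hn', Nat.add_sub_cancel, eC, hAeq]
  calc Fintype.card F ^ k' * Nat.card {x : {x : V → Fin 4 → F // x v₀ = 0} //
          ∀ e ∈ I, quadVal F x.1 (e : Sym2 V) = 0}
      = Fintype.card F ^ (2 * n' + 1)
        * ∑ α : ↥I → F, Nat.card {yz : ({u : V // u ≠ v₀} → F) × ({u : V // u ≠ v₀} → F) //
            QQ G v₀ F I α yz} := hfin
    _ = Fintype.card F ^ (2 * n' + 1)
        * Nat.card {p : (↥I → F) ×
            (({u : V // u ≠ v₀} → F) × ({u : V // u ≠ v₀} → F)) // QQ G v₀ F I p.1 p.2} := by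
        rw [hBeq]
    _ = Fintype.card F ^ (2 * n' + 1) *
        Nat.card {p : (I → F) × ({u : V // u ≠ v₀} → F) × ({u : V // u ≠ v₀} → F) //
          ((redLaplacian F G v₀).map fun pol =>
              eval (fun e => if h : e ∈ I then p.1 ⟨e, h⟩ else 0) pol).mulVec p.2.1 = 0 ∧
          ((redLaplacian F G v₀).map fun pol =>
              eval (fun e => if h : e ∈ I then p.1 ⟨e, h⟩ else 0) pol).mulVec p.2.2 = 0} := rfl
end

section
/- Let G be a finite connected simple graph with N := |E| ≤ 2·n_G and n_G ≥ 2, and let q be a prime power. Then q² divides #{x ∈ F_q^{4n} : Π_{e∈E} q_e(x) = 0}, where n = n_G. -/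
open MvPolynomial

variable {V : Type}

/- ## Auxiliary material.

The key observation: the abelian group `F × F` acts on the solution set, by
* a unipotent symmetry of the quadratic form `y₀y₁ + y₂y₃` (applied simultaneously at
  every vertex) whenever some vertex has a nonzero `0`-th coordinate, and
* translation of the (then irrelevant) coordinate `1` at two fixed vertices `p₁ p₂ ≠ v₀`
  otherwise.
This action is free, so `q²` divides the cardinality of the solution set. -/

/-- If a finite group acts freely on a finite type, its order divides the cardinality. -/
theorem card_dvd_of_free_smul (α β : Type*) [Group α] [Fintype α] [MulAction α β] [Finite β]
    (hfree : ∀ (g : α) (x : β), g • x = x → g = 1) :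
    Fintype.card α ∣ Nat.card β := by
  classical
  cases nonempty_fintype β
  have hstab : ∀ y : β, MulAction.stabilizer α y = ⊥ := by
    intro y
    ext g
    simp only [MulAction.mem_stabilizer_iff, Subgroup.mem_bot]
    exact ⟨fun h => hfree g y h, fun h => by simp [h]⟩
  have h1 : Nat.card β =
      Nat.card (Σ ω : MulAction.orbitRel.Quotient α β, α ⧸ MulAction.stabilizer α ω.out) :=
    Nat.card_congr (MulAction.selfEquivSigmaOrbitsQuotientStabilizer α β)
  have h2 : ∀ ω : MulAction.orbitRel.Quotient α β,
      Nat.card (α ⧸ MulAction.stabilizer α ω.out) = Fintype.card α := by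
    intro ω
    rw [hstab, Nat.card_congr QuotientGroup.quotientBot.toEquiv, Nat.card_eq_fintype_card]
  rw [h1, Nat.card_eq_fintype_card, Fintype.card_sigma]
  simp only [← Nat.card_eq_fintype_card, h2]
  rw [Finset.sum_const, smul_eq_mul, Nat.card_eq_fintype_card]
  exact Dvd.intro_left _ rfl

section Act

variable {F : Type} [Field F] [DecidableEq V]

/-- Unipotent symmetry of the quadratic form `y₀y₁ + y₂y₃`. -/
def uniAct (t s : F) (y : Fin 4 → F) : Fin 4 → F :=
  ![y 0, y 1 + t * y 2 + s * y 3 - s * t * y 0, y 2 - s * y 0, y 3 - t * y 0]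

/-- Translation of coordinate `1` at the two vertices `p₁, p₂`. -/
def trAct (p₁ p₂ : V) (t s : F) (x : V → Fin 4 → F) : V → Fin 4 → F := fun p =>
  ![x p 0, x p 1 + (if p = p₁ then t else 0) + (if p = p₂ then s else 0), x p 2, x p 3]

open scoped Classical in
/-- The combined `F × F` action map. -/
noncomputable def actMap (p₁ p₂ : V) (t s : F) (x : V → Fin 4 → F) : V → Fin 4 → F :=
  if ∀ p, x p 0 = 0 then trAct p₁ p₂ t s x else fun p => uniAct t s (x p)

variable (p₁ p₂ : V) (t s t' s' : F) (x : V → Fin 4 → F)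

lemma actMap_apply_zero (p : V) : actMap p₁ p₂ t s x p 0 = x p 0 := by
  unfold actMap trAct uniAct
  split_ifs <;> simp

lemma actMap_cond : (∀ p, actMap p₁ p₂ t s x p 0 = 0) ↔ (∀ p, x p 0 = 0) := by
  simp [actMap_apply_zero]

lemma actMap_zero : actMap p₁ p₂ (0 : F) 0 x = x := by
  funext p i
  unfold actMap trAct uniAct
  split_ifs with h <;> fin_cases i <;> simp

lemma actMap_add :
    actMap p₁ p₂ t s (actMap p₁ p₂ t' s' x) = actMap p₁ p₂ (t + t') (s + s') x := by
  by_cases h : ∀ p, x p 0 = 0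
  · have h2 : ∀ p, actMap p₁ p₂ t' s' x p 0 = 0 := by simpa [actMap_cond] using h
    funext p i
    rw [actMap, if_pos h2, actMap, if_pos h, actMap, if_pos h]
    unfold trAct
    fin_cases i <;> simp <;> split_ifs <;> ring
  · have h2 : ¬ ∀ p, actMap p₁ p₂ t' s' x p 0 = 0 := by simpa [actMap_cond] using h
    funext p i
    rw [actMap, if_neg h2, actMap, if_neg h, actMap, if_neg h]
    unfold uniAct
    fin_cases i <;> simp <;> ring

lemma quadVal_actMap (e : Sym2 V) :
    quadVal F (actMap p₁ p₂ t s x) e = quadVal F x e := by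
  induction e using Sym2.ind with
  | _ u v =>
    by_cases h : ∀ p, x p 0 = 0
    · rw [actMap, if_pos h]
      simp only [quadVal, Sym2.lift_mk, trAct]
      simp only [Matrix.cons_val_zero, Matrix.cons_val_one, Matrix.head_cons,
        Matrix.cons_val_two, Matrix.cons_val_three, Matrix.tail_cons]
      rw [h u, h v]
      ring
    · rw [actMap, if_neg h]
      simp only [quadVal, Sym2.lift_mk, uniAct]
      simp only [Matrix.cons_val_zero, Matrix.cons_val_one, Matrix.head_cons,
        Matrix.cons_val_two, Matrix.cons_val_three, Matrix.tail_cons]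
      ring

lemma actMap_v₀ (v₀ : V) (h1 : p₁ ≠ v₀) (h2 : p₂ ≠ v₀) (hx : x v₀ = 0) :
    actMap p₁ p₂ t s x v₀ = 0 := by
  have hx' : ∀ i, x v₀ i = 0 := fun i => congrFun hx i
  funext i
  rw [actMap]
  split_ifs with h
  · unfold trAct
    fin_cases i <;> simp [hx', Ne.symm h1, Ne.symm h2]
  · unfold uniAct
    fin_cases i <;> simp [hx']

lemma actMap_free (hp : p₁ ≠ p₂) (hfix : actMap p₁ p₂ t s x = x) : t = 0 ∧ s = 0 := by
  by_cases h : ∀ p, x p 0 = 0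
  · rw [actMap, if_pos h] at hfix
    have e1 := congrFun (congrFun hfix p₁) 1
    have e2 := congrFun (congrFun hfix p₂) 1
    unfold trAct at e1 e2
    simp [hp, Ne.symm hp] at e1 e2
    exact ⟨e1, e2⟩
  · rw [actMap, if_neg h] at hfix
    push_neg at h
    obtain ⟨p, hp0⟩ := h
    have e2 := congrFun (congrFun hfix p) 2
    have e3 := congrFun (congrFun hfix p) 3
    unfold uniAct at e2 e3
    simp only [Matrix.cons_val_two, Matrix.cons_val_three, Matrix.tail_cons, Matrix.head_cons,
      sub_eq_self] at e2 e3
    constructor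
    · rcases mul_eq_zero.mp e3 with h' | h'
      · exact h'
      · exact absurd h' hp0
    · rcases mul_eq_zero.mp e2 with h' | h'
      · exact h'
      · exact absurd h' hp0

end Act

/-- For a finite connected simple graph `G` with `N = |E| ≤ 2·n_G` and
`n_G ≥ 2`, and any finite field `F_q`, `q²` divides
`#{x ∈ F_q^{4n} : Π_{e ∈ E} q_e(x) = 0}` (with `n = n_G` and the distinguished vertex `v₀`
zeroed out). -/
theorem quadrics_union_count_div_q_sq [Fintype V] (G : SimpleGraph V) [Fintype G.edgeSet]
    (hG : G.Connected) (v₀ : V)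
    (hNn : Fintype.card G.edgeSet ≤ 2 * (Fintype.card V - 1))
    (hn : 2 ≤ Fintype.card V - 1)
    (F : Type) [Field F] [Fintype F] :
    Fintype.card F ^ 2 ∣
      Nat.card {x : V → Fin 4 → F // x v₀ = 0 ∧
        ∏ e : G.edgeSet, quadVal F x (e : Sym2 V) = 0} := by
  classical
  -- choose two vertices different from `v₀` and from each other
  obtain ⟨p₁, hp₁, p₂, hp₂, hp⟩ :
      ∃ p₁ ∈ ({v₀}ᶜ : Finset V), ∃ p₂ ∈ ({v₀}ᶜ : Finset V), p₁ ≠ p₂ := by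
    apply Finset.one_lt_card.mp
    rw [Finset.card_compl, Finset.card_singleton]
    omega
  rw [Finset.mem_compl, Finset.mem_singleton] at hp₁ hp₂
  set X := {x : V → Fin 4 → F // x v₀ = 0 ∧
      ∏ e : G.edgeSet, quadVal F x (e : Sym2 V) = 0} with hX
  letI : SMul (Multiplicative F × Multiplicative F) X :=
    ⟨fun g x => ⟨actMap p₁ p₂ (Multiplicative.toAdd g.1) (Multiplicative.toAdd g.2) x.1, by
      refine ⟨actMap_v₀ _ _ _ _ _ v₀ hp₁ hp₂ x.2.1, ?_⟩
      simp only [quadVal_actMap]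
      exact x.2.2⟩⟩
  have hsmul : ∀ (g : Multiplicative F × Multiplicative F) (x : X),
      (g • x).1 = actMap p₁ p₂ (Multiplicative.toAdd g.1) (Multiplicative.toAdd g.2) x.1 :=
    fun _ _ => rfl
  letI : MulAction (Multiplicative F × Multiplicative F) X :=
    { one_smul := fun x => by
        apply Subtype.ext
        rw [hsmul]
        exact actMap_zero p₁ p₂ x.1
      mul_smul := fun g g' x => by
        apply Subtype.ext
        rw [hsmul, hsmul, hsmul]
        exact (actMap_add p₁ p₂ _ _ _ _ x.1).symm }
  have key := card_dvd_of_free_smul (Multiplicative F × Multiplicative F) X (by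
    intro g x hgx
    have hfix := congrArg Subtype.val hgx
    rw [hsmul] at hfix
    obtain ⟨ht, hs⟩ := actMap_free p₁ p₂ _ _ x.1 hp hfix
    refine Prod.ext ?_ ?_
    · exact Multiplicative.toAdd.injective (by simpa using ht)
    · exact Multiplicative.toAdd.injective (by simpa using hs))
  have hcard : Fintype.card (Multiplicative F × Multiplicative F) = Fintype.card F ^ 2 := by
    simp [Fintype.card_prod, sq]
  rwa [hcard] at key
end
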